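/- The Heawood graph H satisfies γ_rdR(H) = 11. -/

import Mathlib

/-!
Lower bound, by discharging: a vertex of value `3` sends charge `2` to each neighbour and a
vertex of value `2` sends charge `1`. Every vertex of value `0` receives at least `2`, and since
degrees are at most `3`, comparing charges vertex by vertex gives `3 |V| ≤ 4 w(f)`, i.e.
`w(f) ≥ 11` on `14` vertices.

Upper bound: fix a vertex `x`, put `3` on `x`, `0` on the other vertices of the ball of radius `2`
around `x` and `2` outside it. Girth `6` makes this ball a tree with `1 + 3 + 6` vertices, and a
vertex at distance `2` has its two remaining neighbours outside the ball, so it sees two `2`s.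
The weight is `3 + 2 · 4 = 11`.
-/

open Finset

/-- A restrained double Roman dominating function. -/
def IsRDRD {V : Type*} (G : SimpleGraph V) (f : V → ℕ) : Prop :=
  (∀ v, f v ≤ 3) ∧
  (∀ v, f v = 0 →
    (∃ u, G.Adj v u ∧ f u = 3) ∨
    (∃ u w, G.Adj v u ∧ G.Adj v w ∧ u ≠ w ∧ f u = 2 ∧ f w = 2)) ∧
  (∀ v, f v = 1 → ∃ u, G.Adj v u ∧ 2 ≤ f u) ∧
  (∀ v, f v = 0 → ∃ u, G.Adj v u ∧ f u = 0)

/-- The restrained double Roman domination number. -/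
noncomputable def rdrNum {V : Type*} [Fintype V] (G : SimpleGraph V) : ℕ :=
  sInf {k | ∃ f : V → ℕ, IsRDRD G f ∧ ∑ v, f v = k}

def IsDomSet {V : Type*} (G : SimpleGraph V) (S : Set V) : Prop :=
  ∀ v ∉ S, ∃ u ∈ S, G.Adj v u

def IsRDomSet {V : Type*} (G : SimpleGraph V) (S : Set V) : Prop :=
  IsDomSet G S ∧ ∀ v ∉ S, ∃ u ∉ S, G.Adj v u

def IsR2DomSet {V : Type*} (G : SimpleGraph V) (S : Set V) : Prop :=
  (∀ v ∉ S, ∃ u w, u ∈ S ∧ w ∈ S ∧ u ≠ w ∧ G.Adj v u ∧ G.Adj v w) ∧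
  ∀ v ∉ S, ∃ u ∉ S, G.Adj v u

noncomputable def domNum {V : Type*} [Fintype V] (G : SimpleGraph V) : ℕ :=
  sInf {k | ∃ S : Finset V, IsDomSet G ↑S ∧ S.card = k}

noncomputable def rDomNum {V : Type*} [Fintype V] (G : SimpleGraph V) : ℕ :=
  sInf {k | ∃ S : Finset V, IsRDomSet G ↑S ∧ S.card = k}

noncomputable def r2DomNum {V : Type*} [Fintype V] (G : SimpleGraph V) : ℕ :=
  sInf {k | ∃ S : Finset V, IsR2DomSet G ↑S ∧ S.card = k}

/-- A restrained Roman dominating function. -/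
def IsRRD {V : Type*} (G : SimpleGraph V) (f : V → ℕ) : Prop :=
  (∀ v, f v ≤ 2) ∧
  (∀ v, f v = 0 → ∃ u, G.Adj v u ∧ f u = 2) ∧
  (∀ v, f v = 0 → ∃ u, G.Adj v u ∧ f u = 0)

noncomputable def rrNum {V : Type*} [Fintype V] (G : SimpleGraph V) : ℕ :=
  sInf {k | ∃ f : V → ℕ, IsRRD G f ∧ ∑ v, f v = k}

/-- A star: all edges are incident to one common vertex. -/
def IsStar {V : Type*} (G : SimpleGraph V) : Prop :=
  ∃ x : V, ∀ ⦃a b : V⦄, G.Adj a b → a = x ∨ b = x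

/-- The join of two graphs. -/
def joinG {α β : Type*} (G : SimpleGraph α) (H : SimpleGraph β) : SimpleGraph (α ⊕ β) :=
  SimpleGraph.fromRel (fun x y => match x, y with
    | Sum.inl a, Sum.inl b => G.Adj a b
    | Sum.inr a, Sum.inr b => H.Adj a b
    | Sum.inl _, Sum.inr _ => True
    | Sum.inr _, Sum.inl _ => True)

/-- The disjoint union of two graphs. -/
def dUnion {α β : Type*} (G : SimpleGraph α) (H : SimpleGraph β) : SimpleGraph (α ⊕ β) :=
  SimpleGraph.fromRel (fun x y => match x, y with
    | Sum.inl a, Sum.inl b => G.Adj a b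
    | Sum.inr a, Sum.inr b => H.Adj a b
    | _, _ => False)

namespace SimpleGraph

variable {V : Type*} {G : SimpleGraph V}

lemma egirth_le_three {a b c : V} (hab : G.Adj a b) (hbc : G.Adj b c) (hca : G.Adj c a) :
    G.egirth ≤ 3 := by
  refine egirth_le_length (w := .cons hab (.cons hbc (.cons hca .nil))) ?_
  simp_all [Walk.isCycle_def, Walk.isTrail_def, hab.ne, hbc.ne, hca.ne, hab.ne', hca.ne']

lemma egirth_le_four {a b c d : V} (hab : G.Adj a b) (hbc : G.Adj b c) (hcd : G.Adj c d)
    (hda : G.Adj d a) (hac : a ≠ c) (hbd : b ≠ d) : G.egirth ≤ 4 := by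
  refine egirth_le_length (w := .cons hab (.cons hbc (.cons hcd (.cons hda .nil)))) ?_
  simp_all [Walk.isCycle_def, Walk.isTrail_def, hab.ne, hbc.ne, hcd.ne, hda.ne, hab.ne',
    hda.ne', hac.symm]

lemma egirth_le_five {a b c d e : V} (hab : G.Adj a b) (hbc : G.Adj b c) (hcd : G.Adj c d)
    (hde : G.Adj d e) (hea : G.Adj e a) (hac : a ≠ c) (had : a ≠ d) (hbd : b ≠ d)
    (hbe : b ≠ e) (hce : c ≠ e) : G.egirth ≤ 5 := by
  refine egirth_le_length (w := .cons hab (.cons hbc (.cons hcd (.cons hde (.cons hea .nil))))) ?_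
  simp_all [Walk.isCycle_def, Walk.isTrail_def, hab.ne, hbc.ne, hcd.ne, hde.ne, hea.ne, hab.ne',
    hea.ne', hac.symm, had.symm]

lemma natCast_girth_eq_egirth (h : G.girth ≠ 0) : (G.girth : ℕ∞) = G.egirth :=
  ENat.natCast_toNat fun htop => h (by simp [girth, htop])

lemma sum_sum_neighborFinset [Fintype V] [DecidableRel G.Adj] {M : Type*} [AddCommMonoid M]
    (g : V → M) : ∑ v, ∑ u ∈ G.neighborFinset v, g u = ∑ u, G.degree u • g u := by
  rw [Finset.sum_comm' (t' := univ) (s' := fun u => G.neighborFinset u)]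
  · simp [← card_neighborFinset_eq_degree]
  · simp [adj_comm]

end SimpleGraph

open SimpleGraph

def rdrdCharge (n : ℕ) : ℕ :=
  if n = 3 then 2 else if n = 2 then 1 else 0

section LowerBound

variable {V : Type*} [Fintype V] {G : SimpleGraph V} [DecidableRel G.Adj] {f : V → ℕ}

lemma IsRDRD.two_le_sum_rdrdCharge (hf : IsRDRD G f) {v : V} (hv : f v = 0) :
    2 ≤ ∑ u ∈ G.neighborFinset v, rdrdCharge (f u) := by
  classical
  rcases hf.2.1 v hv with ⟨u, hvu, hu⟩ | ⟨u, w, hvu, hvw, huw, hu, hw⟩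
  · calc 2 = rdrdCharge (f u) := by simp [rdrdCharge, hu]
      _ ≤ _ := single_le_sum (f := fun z => rdrdCharge (f z)) (fun _ _ => Nat.zero_le _)
          ((G.mem_neighborFinset v u).mpr hvu)
  · calc 2 = ∑ z ∈ {u, w}, rdrdCharge (f z) := by simp [sum_pair huw, rdrdCharge, hu, hw]
      _ ≤ _ := sum_le_sum_of_subset (by simp [insert_subset_iff, hvu, hvw])

lemma IsRDRD.sum_ite_eq_zero_le (hdeg : ∀ v, G.degree v ≤ 3) (hf : IsRDRD G f) :
    ∑ v, (if f v = 0 then 2 else 0) ≤ 3 * ∑ v, rdrdCharge (f v) :=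
  calc ∑ v, (if f v = 0 then 2 else 0)
      ≤ ∑ v, ∑ u ∈ G.neighborFinset v, rdrdCharge (f u) := by
        gcongr with v
        split_ifs with hv
        · exact hf.two_le_sum_rdrdCharge hv
        · exact Nat.zero_le _
    _ = ∑ u, G.degree u * rdrdCharge (f u) := sum_sum_neighborFinset _
    _ ≤ 3 * ∑ v, rdrdCharge (f v) := by
        rw [mul_sum]
        gcongr with u
        exact hdeg u

lemma six_add_rdrdCharge_le {n : ℕ} (hn : n ≤ 3) :
    6 + 9 * rdrdCharge n ≤ 8 * n + 3 * (if n = 0 then 2 else 0) := by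
  interval_cases n <;> simp [rdrdCharge]

lemma IsRDRD.three_mul_card_le (hdeg : ∀ v, G.degree v ≤ 3) (hf : IsRDRD G f) :
    3 * Fintype.card V ≤ 4 * ∑ v, f v := by
  have hsum :
      ∑ v, (6 + 9 * rdrdCharge (f v)) ≤ ∑ v, (8 * f v + 3 * if f v = 0 then 2 else 0) :=
    sum_le_sum fun v _ => six_add_rdrdCharge_le (hf.1 v)
  simp only [sum_add_distrib, ← mul_sum, sum_const, card_univ, smul_eq_mul] at hsum
  have := hf.sum_ite_eq_zero_le hdeg
  omega

end LowerBound

namespace SimpleGraph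

variable {V : Type*} [Fintype V] [DecidableEq V] {G : SimpleGraph V} [DecidableRel G.Adj]

/-- When `G` is triangle-free, these are exactly the vertices at distance `2` from `x`. -/
def secondNeighborFinset (G : SimpleGraph V) [DecidableRel G.Adj] (x : V) : Finset V :=
  (G.neighborFinset x).biUnion fun w => (G.neighborFinset w).erase x

def twoBall (G : SimpleGraph V) [DecidableRel G.Adj] (x : V) : Finset V :=
  insert x (G.neighborFinset x ∪ G.secondNeighborFinset x)

@[simp]
lemma mem_secondNeighborFinset {x v : V} :
    v ∈ G.secondNeighborFinset x ↔ ∃ w, G.Adj x w ∧ G.Adj w v ∧ v ≠ x := by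
  simp [secondNeighborFinset, and_comm, and_left_comm]

lemma disjoint_neighborFinset_secondNeighborFinset (hG : 4 ≤ G.egirth) (x : V) :
    Disjoint (G.neighborFinset x) (G.secondNeighborFinset x) := by
  refine Finset.disjoint_left.mpr fun v hxv hv => ?_
  obtain ⟨w, hxw, hwv, -⟩ := mem_secondNeighborFinset.mp hv
  exact absurd (hG.trans (egirth_le_three hxw hwv ((mem_neighborFinset _ _ _).mp hxv).symm))
    (by decide)

lemma card_secondNeighborFinset (hG : 5 ≤ G.egirth) (x : V) :
    #(G.secondNeighborFinset x) = ∑ w ∈ G.neighborFinset x, (G.degree w - 1) := by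
  rw [secondNeighborFinset, card_biUnion]
  · refine sum_congr rfl fun w hw => ?_
    rw [card_erase_of_mem (by simpa [adj_comm] using hw), card_neighborFinset_eq_degree]
  · intro w₁ hw₁ w₂ hw₂ hne
    refine Finset.disjoint_left.mpr fun v hv₁ hv₂ => ?_
    simp only [mem_coe, mem_erase, mem_neighborFinset] at hw₁ hw₂ hv₁ hv₂
    exact absurd (hG.trans (egirth_le_four hw₁ hv₁.2 hv₂.2.symm hw₂.symm hv₁.1.symm hne))
      (by decide)

lemma ten_le_card_twoBall (hdeg : ∀ v, 3 ≤ G.degree v) (hG : 5 ≤ G.egirth) (x : V) :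
    10 ≤ #(G.twoBall x) := by
  have hx : x ∉ G.neighborFinset x ∪ G.secondNeighborFinset x := by simp
  have hsecond : ∑ _w ∈ G.neighborFinset x, 2 ≤ #(G.secondNeighborFinset x) := by
    rw [card_secondNeighborFinset hG]
    exact sum_le_sum fun w _ => by have := hdeg w; omega
  rw [twoBall, card_insert_of_notMem hx,
    card_union_of_disjoint (disjoint_neighborFinset_secondNeighborFinset
      ((by decide : (4 : ℕ∞) ≤ 5).trans hG) x), card_neighborFinset_eq_degree]
  rw [sum_const, smul_eq_mul, card_neighborFinset_eq_degree] at hsecond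
  have := hdeg x
  omega

lemma notMem_twoBall_of_adj (hG : 6 ≤ G.egirth) {x w v u : V} (hxw : G.Adj x w)
    (hwv : G.Adj w v) (hvx : v ≠ x) (hvu : G.Adj v u) (huw : u ≠ w) : u ∉ G.twoBall x := by
  have h3 : ¬ G.egirth ≤ 3 := fun h => absurd (hG.trans h) (by decide)
  have h4 : ¬ G.egirth ≤ 4 := fun h => absurd (hG.trans h) (by decide)
  have h5 : ¬ G.egirth ≤ 5 := fun h => absurd (hG.trans h) (by decide)
  simp only [twoBall, mem_insert, mem_union, mem_neighborFinset, mem_secondNeighborFinset]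
  rintro (rfl | hxu | ⟨w', hxw', hw'u, hux⟩)
  · exact h3 (egirth_le_three hxw hwv hvu)
  · exact h4 (egirth_le_four hxw hwv hvu hxu.symm hvx.symm huw.symm)
  · obtain rfl | hww' := eq_or_ne w w'
    · exact h3 (egirth_le_three hwv hvu hw'u.symm)
    obtain rfl | hvw' := eq_or_ne v w'
    · exact h3 (egirth_le_three hxw hwv hxw'.symm)
    exact h5 (egirth_le_five hxw hwv hvu hw'u.symm hxw'.symm hvx.symm hux.symm huw.symm hww'
      hvw')

def twoBallLabel (G : SimpleGraph V) [DecidableRel G.Adj] (x v : V) : ℕ :=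
  if v = x then 3 else if v ∈ G.twoBall x then 0 else 2

lemma twoBallLabel_eq_zero {x v : V} :
    G.twoBallLabel x v = 0 ↔ v ≠ x ∧ v ∈ G.twoBall x := by
  unfold twoBallLabel; split_ifs <;> simp_all

lemma twoBallLabel_eq_two {x v : V} (hv : v ∉ G.twoBall x) : G.twoBallLabel x v = 2 := by
  have : v ≠ x := by rintro rfl; simp [twoBall] at hv
  simp [twoBallLabel, this, hv]

lemma isRDRD_twoBallLabel (hdeg : ∀ v, 3 ≤ G.degree v) (hG : 6 ≤ G.egirth) (x : V) :
    IsRDRD G (G.twoBallLabel x) := by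
  have hzero {v : V} (hv : G.twoBallLabel x v = 0) :
      G.Adj x v ∨ ∃ w, G.Adj x w ∧ G.Adj w v ∧ v ≠ x := by
    obtain ⟨hvx, hv⟩ := twoBallLabel_eq_zero.mp hv
    simpa [twoBall, hvx] using hv
  refine ⟨fun v => ?_, fun v hv => ?_, fun v hv => ?_, fun v hv => ?_⟩
  · unfold twoBallLabel; split_ifs <;> omega
  · rcases hzero hv with hxv | ⟨w, hxw, hwv, hvx⟩
    · exact Or.inl ⟨x, hxv.symm, by simp [twoBallLabel]⟩
    · have : 1 < #((G.neighborFinset v).erase w) := by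
        rw [card_erase_of_mem (by simpa [adj_comm] using hwv), card_neighborFinset_eq_degree]
        have := hdeg v
        omega
      obtain ⟨u, hu, u', hu', huu'⟩ := one_lt_card.mp this
      rw [mem_erase, mem_neighborFinset] at hu hu'
      exact Or.inr ⟨u, u', hu.2, hu'.2, huu',
        twoBallLabel_eq_two (notMem_twoBall_of_adj hG hxw hwv hvx hu.2 hu.1),
        twoBallLabel_eq_two (notMem_twoBall_of_adj hG hxw hwv hvx hu'.2 hu'.1)⟩
  · unfold twoBallLabel at hv; split_ifs at hv <;> omega
  · rcases hzero hv with hxv | ⟨w, hxw, hwv, -⟩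
    · have : 0 < #((G.neighborFinset v).erase x) := by
        rw [card_erase_of_mem (by simpa [adj_comm] using hxv), card_neighborFinset_eq_degree]
        have := hdeg v
        omega
      obtain ⟨w, hw⟩ := card_pos.mp this
      rw [mem_erase, mem_neighborFinset] at hw
      refine ⟨w, hw.2, twoBallLabel_eq_zero.mpr ⟨hw.1, ?_⟩⟩
      simpa [twoBall, hw.1] using Or.inr ⟨v, hxv, hw.2⟩
    · exact ⟨w, hwv.symm, twoBallLabel_eq_zero.mpr ⟨hxw.ne', by simp [twoBall, hxw]⟩⟩

lemma sum_twoBallLabel_add (x : V) :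
    ∑ v, G.twoBallLabel x v + 2 * #(G.twoBall x) = 2 * Fintype.card V + 3 := by
  have hpoint (v : V) : G.twoBallLabel x v + (if v ∈ G.twoBall x then 2 else 0) =
      2 + (if v = x then 3 else 0) := by
    unfold twoBallLabel
    split_ifs <;> simp_all [twoBall]
  have := congrArg (fun g => ∑ v, g v) (funext hpoint)
  simp only [sum_add_distrib, sum_ite_mem, univ_inter, sum_ite_eq', mem_univ, if_true,
    sum_const, card_univ, smul_eq_mul] at this
  omega

end SimpleGraph

section Bounds

variable {V : Type*} [Fintype V] {G : SimpleGraph V}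

lemma exists_isRDRD_sum_eq_rdrNum (G : SimpleGraph V) :
    ∃ f : V → ℕ, IsRDRD G f ∧ ∑ v, f v = rdrNum G :=
  Nat.sInf_mem (s := {k | ∃ f : V → ℕ, IsRDRD G f ∧ ∑ v, f v = k})
    ⟨_, fun _ => 2, by simp [IsRDRD], rfl⟩

lemma rdrNum_le {f : V → ℕ} (hf : IsRDRD G f) : rdrNum G ≤ ∑ v, f v :=
  Nat.sInf_le ⟨f, hf, rfl⟩

lemma three_mul_card_le_four_mul_rdrNum [DecidableRel G.Adj] (hdeg : ∀ v, G.degree v ≤ 3) :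
    3 * Fintype.card V ≤ 4 * rdrNum G := by
  obtain ⟨f, hf, hsum⟩ := exists_isRDRD_sum_eq_rdrNum G
  exact hsum ▸ hf.three_mul_card_le hdeg

lemma rdrNum_add_seventeen_le [Nonempty V] [DecidableEq V] [DecidableRel G.Adj]
    (hdeg : ∀ v, 3 ≤ G.degree v) (hG : 6 ≤ G.egirth) :
    rdrNum G + 17 ≤ 2 * Fintype.card V := by
  obtain ⟨x⟩ := ‹Nonempty V›
  have hle := rdrNum_le (isRDRD_twoBallLabel hdeg hG x)
  have hsum := G.sum_twoBallLabel_add x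
  have hcard := ten_le_card_twoBall hdeg ((by decide : (5 : ℕ∞) ≤ 6).trans hG) x
  omega

end Bounds

/-- Any 3-regular graph on 14 vertices with girth 6 (i.e. the Heawood graph, the
unique (3,6)-cage) has restrained double Roman domination number 11. -/
theorem stmt_6 {V : Type*} [Fintype V] (G : SimpleGraph V) [DecidableRel G.Adj]
    (hcard : Fintype.card V = 14) (hreg : G.IsRegularOfDegree 3) (hg : G.girth = 6) :
    rdrNum G = 11 := by
  classical
  have : Nonempty V := Fintype.card_pos_iff.mp (by omega)
  have hG : 6 ≤ G.egirth := by
    rw [← natCast_girth_eq_egirth (by omega), hg]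
    rfl
  have hlower := three_mul_card_le_four_mul_rdrNum (G := G) fun v => (hreg v).le
  have hupper := rdrNum_add_seventeen_le (fun v => (hreg v).ge) hG
  omega
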